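/- arXiv:2506.05002 — 2 statements merged into one kernel-verified Lean document; each statement's English description precedes it below -/
import Mathlib

section
/- The scalar delay-difference equation x(t) = ∫_{-1}^0 x(t+θ)(a + bθ)dθ is strongly stable if and only if (a,b) lies in the union of { (a,b) : (a−b)² + a² < 2|b| and a(b−a) > 0 } and { (a,b) : |a − b/2| < 1 and a(b−a) ≤ 0 }. -/
open MeasureTheory
open intervalIntegral Real

/-- Exponential stability of the perturbed scalar delay-difference equation
`x(t) = ∫_{-1}^0 x(t+φ(θ)) (a+bθ) dθ`. -/
def ExpStablePerturbed (a b : ℝ) (φ : ℝ → ℝ) : Prop :=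
  ∃ K > (0:ℝ), ∃ α > (0:ℝ),
    ∀ x : ℝ → ℝ, ContinuousOn x (Set.Ici (-1)) →
      (∀ t ≥ (0:ℝ), x t = ∫ θ in (-1:ℝ)..0, x (t + φ θ) * (a + b * θ)) →
      ∀ t ≥ (0:ℝ), ∀ θ ∈ Set.Icc (-1:ℝ) 0,
        |x (t + θ)| ≤ K * Real.exp (-α * t) * sSup ((fun s => |x s|) '' Set.Icc (-1) 0)

/-- Strong stability of `x(t) = ∫_{-1}^0 x(t+θ)(a+bθ)dθ`: every admissible Borel
perturbation of the delays yields an exponentially stable system. Admissibility of the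
pushforward means its atom at `0` has mass different from `1`. -/
def StronglyStableAB (a b : ℝ) : Prop :=
  ∀ φ : ℝ → ℝ, Measurable φ → Set.MapsTo φ (Set.Icc (-1) 0) (Set.Icc (-1) 0) →
    (∫ θ in {θ ∈ Set.Icc (-1:ℝ) 0 | φ θ = 0}, (a + b * θ)) ≠ 1 →
    ExpStablePerturbed a b φ


lemma lin_cont (a b : ℝ) : Continuous fun θ : ℝ => a + b*θ := by continuity

lemma lin_int (a b u v : ℝ) : ∫ θ in u..v, (a + b*θ) = a*(v-u) + b*(v^2-u^2)/2 := by
  rw [intervalIntegral.integral_add (g := fun θ : ℝ => b * θ) intervalIntegrable_const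
    (((continuous_const.mul continuous_id : Continuous fun θ : ℝ => b * θ)).intervalIntegrable u v)]
  rw [intervalIntegral.integral_const, intervalIntegral.integral_const_mul, integral_id,
    smul_eq_mul]
  ring

lemma abs_int (a b u v : ℝ) (huv : u ≤ v) (hsgn : (∀ θ ∈ Set.Icc u v, 0 ≤ a + b*θ) ∨ (∀ θ ∈ Set.Icc u v, a + b*θ ≤ 0)) :
    ∫ θ in u..v, |a + b*θ| = |a*(v-u) + b*(v^2-u^2)/2| := by
  rcases hsgn with h | h
  · have h1 := h u ⟨le_refl u, huv⟩
    have h2 := h v ⟨huv, le_refl v⟩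
    rw [intervalIntegral.integral_congr (g := fun θ => a + b*θ)
      (fun θ hθ => abs_of_nonneg (h θ (by rwa [Set.uIcc_of_le huv] at hθ))), lin_int,
      abs_of_nonneg (by nlinarith [mul_nonneg (sub_nonneg.2 huv) (add_nonneg h1 h2)] :
        (0:ℝ) ≤ a*(v-u) + b*(v^2-u^2)/2)]
  · have h1 := h u ⟨le_refl u, huv⟩
    have h2 := h v ⟨huv, le_refl v⟩
    rw [intervalIntegral.integral_congr (g := fun θ => -(a + b*θ))
      (fun θ hθ => abs_of_nonpos (h θ (by rwa [Set.uIcc_of_le huv] at hθ))),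
      intervalIntegral.integral_neg, lin_int,
      abs_of_nonpos (by nlinarith [mul_nonpos_of_nonneg_of_nonpos (sub_nonneg.2 huv) (add_nonpos h1 h2)] :
        a*(v-u) + b*(v^2-u^2)/2 ≤ 0)]

lemma q_eq_nosign (a b : ℝ) (h : a*(b-a) ≤ 0) :
    ∫ θ in (-1:ℝ)..0, |a + b*θ| = |a - b/2| := by
  have hh : (∀ θ ∈ Set.Icc (-1:ℝ) 0, 0 ≤ a + b*θ) ∨ (∀ θ ∈ Set.Icc (-1:ℝ) 0, a + b*θ ≤ 0) := by
    have key : ∀ θ ∈ Set.Icc (-1:ℝ) 0, a + b*θ = (1+θ)*a + (-θ)*(a-b) := by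
      intro θ _; ring
    rcases lt_trichotomy a 0 with ha | ha | ha
    · right; intro θ hθ; rw [key θ hθ]
      have hba : 0 ≤ b - a := by nlinarith
      have := mul_nonpos_of_nonneg_of_nonpos (by linarith [hθ.1] : (0:ℝ) ≤ 1+θ) ha.le
      have := mul_nonpos_of_nonneg_of_nonpos (by linarith [hθ.2] : (0:ℝ) ≤ -θ) (by linarith : a - b ≤ 0)
      linarith
    · subst ha
      rcases le_or_gt 0 b with hb | hb
      · right; intro θ hθ
        have := mul_nonpos_of_nonneg_of_nonpos hb (hθ.2)
        simpa using this
      · left; intro θ hθ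
        have := mul_nonneg (neg_nonneg.2 hb.le) (neg_nonneg.2 hθ.2)
        nlinarith
    · left; intro θ hθ; rw [key θ hθ]
      have hba : b - a ≤ 0 := by nlinarith
      have := mul_nonneg (by linarith [hθ.1] : (0:ℝ) ≤ 1+θ) ha.le
      have := mul_nonneg (by linarith [hθ.2] : (0:ℝ) ≤ -θ) (by linarith : 0 ≤ a - b)
      linarith
  rw [abs_int a b (-1) 0 (by norm_num) hh]
  norm_num
  ring_nf

lemma q_eq_sign (a b : ℝ) (h : 0 < a*(b-a)) :
    ∫ θ in (-1:ℝ)..0, |a + b*θ| = ((a-b)^2 + a^2)/(2*|b|) := by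
  have hb : b ≠ 0 := by rintro rfl; nlinarith [sq_nonneg a]
  have hc1 : -1 < -a/b ∧ -a/b < 0 := by
    constructor
    · rcases lt_or_gt_of_ne hb with hb' | hb'
      · rw [lt_div_iff_of_neg hb']; nlinarith
      · rw [lt_div_iff₀ hb']; nlinarith
    · rcases lt_or_gt_of_ne hb with hb' | hb'
      · rw [div_neg_iff]; left; constructor <;> nlinarith
      · rw [div_neg_iff]; right; constructor <;> nlinarith
  have habs : Continuous fun θ : ℝ => |a + b*θ| := (lin_cont a b).abs
  have hsplit : (∫ θ in (-1:ℝ)..(-a/b), |a + b*θ|) + (∫ θ in (-a/b)..(0:ℝ), |a + b*θ|)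
      = ∫ θ in (-1:ℝ)..0, |a + b*θ| :=
    intervalIntegral.integral_add_adjacent_intervals (habs.intervalIntegrable _ _)
      (habs.intervalIntegrable _ _)
  have hbc : b * (-a/b) = -a := by field_simp
  rcases lt_or_gt_of_ne hb with hb' | hb'
  · -- b < 0, then a < 0
    have ha : a < 0 := by nlinarith
    have e1 : ∫ θ in (-1:ℝ)..(-a/b), |a + b*θ| = |a*((-a/b)-(-1)) + b*((-a/b)^2-(-1)^2)/2| := by
      apply abs_int a b _ _ hc1.1.le
      left; intro θ hθ; nlinarith [hθ.2, mul_le_mul_of_nonpos_left hθ.2 hb'.le]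
    have e2 : ∫ θ in (-a/b)..(0:ℝ), |a + b*θ| = |a*(0-(-a/b)) + b*(0^2-(-a/b)^2)/2| := by
      apply abs_int a b _ _ hc1.2.le
      right; intro θ hθ; nlinarith [hθ.1, mul_le_mul_of_nonpos_left hθ.1 hb'.le]
    rw [← hsplit, e1, e2]
    have k1 : a*((-a/b)-(-1)) + b*((-a/b)^2-(-1)^2)/2 = -((a-b)^2/(2*b)) := by
      field_simp; ring
    have k2 : a*(0-(-a/b)) + b*(0^2-(-a/b)^2)/2 = a^2/(2*b) := by
      field_simp; ring
    have h2b : |2*b| = 2*|b| := by rw [abs_mul]; norm_num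
    rw [k1, k2, abs_neg, abs_div, abs_div, ← add_div, h2b,
      abs_of_nonneg (by positivity : (0:ℝ) ≤ (a-b)^2), abs_of_nonneg (by positivity : (0:ℝ) ≤ a^2)]
  · -- b > 0, then a > 0
    have ha : 0 < a := by nlinarith
    have e1 : ∫ θ in (-1:ℝ)..(-a/b), |a + b*θ| = |a*((-a/b)-(-1)) + b*((-a/b)^2-(-1)^2)/2| := by
      apply abs_int a b _ _ hc1.1.le
      right; intro θ hθ; nlinarith [hθ.2, mul_le_mul_of_nonneg_left hθ.2 hb'.le]
    have e2 : ∫ θ in (-a/b)..(0:ℝ), |a + b*θ| = |a*(0-(-a/b)) + b*(0^2-(-a/b)^2)/2| := by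
      apply abs_int a b _ _ hc1.2.le
      left; intro θ hθ; nlinarith [hθ.1, mul_le_mul_of_nonneg_left hθ.1 hb'.le]
    rw [← hsplit, e1, e2]
    have k1 : a*((-a/b)-(-1)) + b*((-a/b)^2-(-1)^2)/2 = -((a-b)^2/(2*b)) := by
      field_simp; ring
    have k2 : a*(0-(-a/b)) + b*(0^2-(-a/b)^2)/2 = a^2/(2*b) := by
      field_simp; ring
    have h2b : |2*b| = 2*|b| := by rw [abs_mul]; norm_num
    rw [k1, k2, abs_neg, abs_div, abs_div, ← add_div, h2b,
      abs_of_nonneg (by positivity : (0:ℝ) ≤ (a-b)^2), abs_of_nonneg (by positivity : (0:ℝ) ≤ a^2)]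

noncomputable def Ppart (a b : ℝ) : ℝ := ∫ θ in (-1:ℝ)..0, max (a + b*θ) 0
noncomputable def Npart (a b : ℝ) : ℝ := ∫ θ in (-1:ℝ)..0, max (-(a + b*θ)) 0

lemma pos_cont (a b : ℝ) : Continuous fun θ : ℝ => max (a + b*θ) 0 :=
  (lin_cont a b).max continuous_const
lemma neg_cont (a b : ℝ) : Continuous fun θ : ℝ => max (-(a + b*θ)) 0 :=
  (lin_cont a b).neg.max continuous_const

lemma Ppart_nonneg (a b : ℝ) : 0 ≤ Ppart a b :=
  intervalIntegral.integral_nonneg (by norm_num) (fun θ _ => le_max_right _ _)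
lemma Npart_nonneg (a b : ℝ) : 0 ≤ Npart a b :=
  intervalIntegral.integral_nonneg (by norm_num) (fun θ _ => le_max_right _ _)

lemma PN_add (a b : ℝ) : Ppart a b + Npart a b = ∫ θ in (-1:ℝ)..0, |a + b*θ| := by
  rw [Ppart, Npart, ← intervalIntegral.integral_add
    ((pos_cont a b).intervalIntegrable _ _) ((neg_cont a b).intervalIntegrable _ _)]
  apply intervalIntegral.integral_congr
  intro θ _
  simp only []
  rcases le_total (a + b*θ) 0 with h | h
  · rw [max_eq_right h, max_eq_left (by linarith), abs_of_nonpos h]; ring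
  · rw [max_eq_left h, max_eq_right (by linarith), abs_of_nonneg h]; ring

lemma PN_sub (a b : ℝ) : Ppart a b - Npart a b = a - b/2 := by
  have : Ppart a b - Npart a b = ∫ θ in (-1:ℝ)..0, (a + b*θ) := by
    rw [Ppart, Npart, ← intervalIntegral.integral_sub
      ((pos_cont a b).intervalIntegrable _ _) ((neg_cont a b).intervalIntegrable _ _)]
    apply intervalIntegral.integral_congr
    intro θ _
    simp only []
    rcases le_total (a + b*θ) 0 with h | h
    · rw [max_eq_right h, max_eq_left (by linarith)]; ring
    · rw [max_eq_left h, max_eq_right (by linarith)]; ring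
  rw [this, lin_int]; ring

lemma two_point (a b u v : ℝ) :
    ∫ θ in (-1:ℝ)..0, (if 0 ≤ a + b*θ then u else v)*(a + b*θ)
      = u * Ppart a b - v * Npart a b := by
  have key : ∀ θ : ℝ, (if 0 ≤ a + b*θ then u else v)*(a + b*θ)
      = u * max (a + b*θ) 0 - v * max (-(a + b*θ)) 0 := by
    intro θ
    split_ifs with h
    · rw [max_eq_left h, max_eq_right (by linarith)]; ring
    · push_neg at h
      rw [max_eq_right h.le, max_eq_left (by linarith)]; ring
  rw [intervalIntegral.integral_congr (g := fun θ => u * max (a + b*θ) 0 - v * max (-(a + b*θ)) 0)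
    (fun θ _ => key θ)]
  rw [intervalIntegral.integral_sub (f := fun θ => u * max (a + b*θ) 0) (g := fun θ => v * max (-(a + b*θ)) 0) ((continuous_const.mul (pos_cont a b)).intervalIntegrable _ _)
    ((continuous_const.mul (neg_cont a b)).intervalIntegrable _ _),
    intervalIntegral.integral_const_mul, intervalIntegral.integral_const_mul, Ppart, Npart]

lemma const_delay (a b t : ℝ) (x : ℝ → ℝ) :
    ∫ θ in (-1:ℝ)..0, x (t + -1) * (a + b*θ) = x (t - 1) * (a - b/2) := by
  rw [intervalIntegral.integral_const_mul, lin_int, show t + -1 = t - 1 by ring,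
    show a*(0-(-1)) + b*(0^2-(-1)^2)/2 = a - b/2 by ring]

lemma sSup_le_one_of (x : ℝ → ℝ) (h : ∀ s ∈ Set.Icc (-1:ℝ) 0, |x s| ≤ 1) :
    sSup ((fun s => |x s|) '' Set.Icc (-1:ℝ) 0) ≤ 1 := by
  apply csSup_le (Set.Nonempty.image _ ⟨0, Set.mem_Icc.2 ⟨by norm_num, le_refl 0⟩⟩)
  rintro _ ⟨s, hs, rfl⟩
  exact h s hs

lemma no_decay (K α : ℝ) (hK : 0 < K) (hα : 0 < α) (x : ℝ → ℝ) (M : ℝ) (hM : M ≤ 1)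
    (hgrow : ∀ k : ℕ, 1 ≤ |x (2*(k:ℝ))|)
    (H : ∀ t ≥ (0:ℝ), ∀ θ ∈ Set.Icc (-1:ℝ) 0, |x (t + θ)| ≤ K * Real.exp (-α * t) * M) :
    False := by
  obtain ⟨k, hk⟩ := exists_nat_gt (Real.log K / α)
  have hk' : Real.log K < α * k := by
    rw [div_lt_iff₀ hα] at hk; linarith
  have h1 := H (2*(k:ℝ)) (by positivity) 0 ⟨by norm_num, le_refl 0⟩
  rw [add_zero] at h1
  have hlt : K * Real.exp (-α * (2*(k:ℝ))) < 1 := by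
    rw [← Real.exp_log hK, ← Real.exp_add]
    have : Real.log K + -α * (2*(k:ℝ)) < 0 := by
      have hαk : 0 ≤ α * k := by positivity
      nlinarith
    calc Real.exp (Real.log K + -α * (2*(k:ℝ))) < Real.exp 0 := Real.exp_lt_exp.2 this
      _ = 1 := Real.exp_zero
  have h2 : K * Real.exp (-α * (2*(k:ℝ))) * M ≤ K * Real.exp (-α * (2*(k:ℝ))) * 1 :=
    mul_le_mul_of_nonneg_left hM (by positivity)
  have := hgrow k
  linarith [h1, h2, hlt]

lemma unstableA (a b : ℝ) (hd : 1 < a - b/2) : ¬ StronglyStableAB a b := by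
  intro hSS
  have hd0 : (0:ℝ) < a - b/2 := by linarith
  set σ : ℝ := Real.log (a - b/2) with hσ
  have hσ0 : 0 < σ := Real.log_pos hd
  set x : ℝ → ℝ := fun t => Real.exp (σ * t) with hx
  have hES := hSS (fun _ => (-1:ℝ)) measurable_const
    (fun θ _ => ⟨le_refl _, by norm_num⟩)
    (by
      have : {θ ∈ Set.Icc (-1:ℝ) 0 | (-1:ℝ) = 0} = ∅ := by
        ext θ; simp
      rw [this]
      simp)
  obtain ⟨K, hK, α, hα, H⟩ := hES
  have hxeq : ∀ t ≥ (0:ℝ), x t = ∫ θ in (-1:ℝ)..0, x (t + -1) * (a + b * θ) := by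
    intro t _
    rw [const_delay a b t x]
    have : x (t-1) = x t * (a - b/2)⁻¹ := by
      simp only [hx]
      rw [← Real.exp_log hd0, ← Real.exp_neg, ← Real.exp_add]
      congr 1
      rw [hσ]; ring
    rw [this, mul_assoc, inv_mul_cancel₀ (ne_of_gt hd0), mul_one]
  have Hx := H x (Real.continuous_exp.comp (continuous_const.mul continuous_id)).continuousOn hxeq
  apply no_decay K α hK hα x _ (sSup_le_one_of x ?_) ?_ Hx
  · intro s hs
    simp only [hx, abs_of_pos (Real.exp_pos _)]
    rw [← Real.exp_zero]
    exact Real.exp_le_exp.2 (by nlinarith [hs.2])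
  · intro k
    simp only [hx, abs_of_pos (Real.exp_pos _)]
    rw [← Real.exp_zero]
    exact Real.exp_le_exp.2 (by positivity)


lemma angles (p n : ℝ) (hp : 0 ≤ p) (hn : 0 ≤ n) (hq1 : 1 ≤ p + n)
    (hd1 : p - n ≤ 1) (hd2 : -1 ≤ p - n) :
    ∃ c1 c2 : ℝ, 0 ≤ c1 ∧ c1 ≤ π ∧ 0 ≤ c2 ∧ c2 < 2*π ∧
      p * Real.cos c1 - n * Real.cos c2 = 1 ∧ p * Real.sin c1 - n * Real.sin c2 = 0 := by
  set C : ℝ := (p^2 + 1 - n^2)/(2*p) with hCdef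
  have hC1 : -1 ≤ C ∧ C ≤ 1 := by
    rcases eq_or_lt_of_le hp with hp0 | hp0
    · constructor <;> · rw [hCdef, ← hp0]; norm_num
    · constructor
      · rw [hCdef, le_div_iff₀ (by positivity)]
        nlinarith [mul_nonneg (by linarith : (0:ℝ) ≤ p + 1 - n) (by linarith : (0:ℝ) ≤ p + 1 + n)]
      · rw [hCdef, div_le_one (by positivity)]
        nlinarith [mul_nonneg (by linarith : (0:ℝ) ≤ n - p + 1) (by linarith : (0:ℝ) ≤ n + p - 1)]
  have key : p^2 + 1 - 2*p*C = n^2 := by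
    rcases eq_or_lt_of_le hp with hp0 | hp0
    · have hn1 : n = 1 := le_antisymm (by linarith) (by linarith)
      rw [hn1, ← hp0]; norm_num
    · have h2p : 2*p*C = p^2 + 1 - n^2 := by
        rw [hCdef, mul_div_cancel₀ _ (by positivity : (2:ℝ)*p ≠ 0)]
      linarith
  have hCsq : 0 ≤ 1 - C^2 := by nlinarith [hC1.1, hC1.2]
  have hcos1 : Real.cos (Real.arccos C) = C := Real.cos_arccos hC1.1 hC1.2
  have hs1sq : (Real.sin (Real.arccos C))^2 = 1 - C^2 := by
    rw [Real.sin_arccos, Real.sq_sqrt hCsq]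
  set s1 : ℝ := Real.sin (Real.arccos C) with hs1def
  set z : ℂ := ⟨(p*C-1)/n, p*s1/n⟩ with hzdef
  have E12 : p * Real.cos (Real.arccos C) - n * Real.cos (Complex.arg z) = 1 ∧
      p * s1 - n * Real.sin (Complex.arg z) = 0 := by
    rcases eq_or_lt_of_le hn with hn0 | hn0
    · have hp1 : p = 1 := le_antisymm (by linarith) (by linarith)
      have hCone : C = 1 := by rw [hCdef, hp1, ← hn0]; norm_num
      have hs10 : s1 = 0 := by
        have h2 := hs1sq; rw [hCone] at h2
        have : s1^2 = 0 := by rw [hs1def] at *; linarith [h2]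
        exact pow_eq_zero_iff (by norm_num) |>.1 this
      constructor
      · rw [hcos1, hCone, hp1, ← hn0]; ring
      · rw [hs10, ← hn0]; ring
    · have expand : (p*C-1)^2 + (p*s1)^2 = n^2 := by
        linear_combination p^2 * hs1sq + key
      have habs : ‖z‖ = 1 := by
        rw [Complex.norm_def, hzdef, Complex.normSq_mk]
        rw [show (p*C-1)/n * ((p*C-1)/n) + p*s1/n * (p*s1/n) = 1 by
          field_simp; linear_combination expand]
        exact Real.sqrt_one
      have hz0 : z ≠ 0 := by
        intro h; rw [h] at habs; simp at habs
      have hcos2 : Real.cos (Complex.arg z) = (p*C-1)/n := by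
        rw [Complex.cos_arg hz0, habs, div_one, hzdef]
      have hsin2 : Real.sin (Complex.arg z) = p*s1/n := by
        rw [Complex.sin_arg, habs, div_one, hzdef]
      constructor
      · rw [hcos1, hcos2]; field_simp; ring
      · rw [hsin2]; field_simp; ring
  rcases le_or_gt 0 (Complex.arg z) with hc | hc
  · exact ⟨Real.arccos C, Complex.arg z, Real.arccos_nonneg C, Real.arccos_le_pi C,
      hc, lt_of_le_of_lt (Complex.arg_le_pi z) (by linarith [Real.pi_pos]),
      E12.1, E12.2⟩
  · refine ⟨Real.arccos C, Complex.arg z + 2*π, Real.arccos_nonneg C, Real.arccos_le_pi C,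
      by linarith [Complex.neg_pi_lt_arg z], by linarith, ?_, ?_⟩
    · rw [Real.cos_add_two_pi]; exact E12.1
    · rw [Real.sin_add_two_pi]; exact E12.2

lemma stable_of_q_lt_one (a b : ℝ) (hq : (∫ θ in (-1:ℝ)..0, |a+b*θ|) < 1)
    (φ : ℝ → ℝ) (hmaps : Set.MapsTo φ (Set.Icc (-1) 0) (Set.Icc (-1) 0)) :
    ExpStablePerturbed a b φ := by
  set q : ℝ := ∫ θ in (-1:ℝ)..0, |a+b*θ| with hqdef
  have hq0 : 0 ≤ q :=
    intervalIntegral.integral_nonneg (by norm_num) (fun θ _ => abs_nonneg _)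
  set Q : ℝ := max q (1/2) with hQdef
  have hQ0 : 0 < Q := lt_max_of_lt_right (by norm_num)
  have hQ1 : Q < 1 := max_lt hq (by norm_num)
  have hqQ : q ≤ Q := le_max_left _ _
  set α : ℝ := -Real.log Q with hαdef
  have hα : 0 < α := by
    have := Real.log_neg hQ0 hQ1
    simp only [hαdef]; linarith
  refine ⟨Real.exp α, Real.exp_pos _, α, hα, ?_⟩
  intro x hx hxeq
  set M : ℝ := sSup ((fun s => |x s|) '' Set.Icc (-1) 0) with hMdef
  have hxabs : ContinuousOn (fun s => |x s|) (Set.Icc (-1:ℝ) 0) :=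
    (hx.mono Set.Icc_subset_Ici_self).abs
  have hbdd : BddAbove ((fun s => |x s|) '' Set.Icc (-1:ℝ) 0) :=
    (isCompact_Icc.image_of_continuousOn hxabs).bddAbove
  have hMle : ∀ s ∈ Set.Icc (-1:ℝ) 0, |x s| ≤ M := fun s hs => le_csSup hbdd ⟨s, hs, rfl⟩
  have hM0 : 0 ≤ M := le_trans (abs_nonneg _) (hMle 0 ⟨by norm_num, le_refl 0⟩)
  -- core estimate
  have core : ∀ t : ℝ, 0 ≤ t → ∀ B : ℝ, 0 ≤ B →
      (∀ u ∈ Set.Icc (t-1) t, |x u| ≤ B) → |x t| ≤ Q * B := by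
    intro t ht B hB hub
    rw [hxeq t ht]
    have h1 : |∫ θ in (-1:ℝ)..0, x (t + φ θ) * (a + b*θ)|
        ≤ ∫ θ in (-1:ℝ)..0, |x (t + φ θ) * (a + b*θ)| :=
      intervalIntegral.abs_integral_le_integral_abs (by norm_num)
    have h2 : (∫ θ in (-1:ℝ)..0, |x (t + φ θ) * (a + b*θ)|)
        ≤ ∫ θ in (-1:ℝ)..0, B * |a + b*θ| := by
      rw [intervalIntegral.integral_of_le (by norm_num : (-1:ℝ) ≤ 0),
        intervalIntegral.integral_of_le (by norm_num : (-1:ℝ) ≤ 0)]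
      apply integral_mono_of_nonneg
      · exact Filter.Eventually.of_forall (fun θ => abs_nonneg _)
      · exact (continuous_const.mul (lin_cont a b).abs).integrableOn_Ioc
      · filter_upwards [ae_restrict_mem measurableSet_Ioc] with θ hθ
        rw [abs_mul]
        apply mul_le_mul_of_nonneg_right _ (abs_nonneg _)
        have hφ := hmaps (Set.Ioc_subset_Icc_self hθ)
        exact hub (t + φ θ) ⟨by linarith [hφ.1], by linarith [hφ.2]⟩
    have h3 : (∫ θ in (-1:ℝ)..0, B * |a + b*θ|) = B * q :=
      intervalIntegral.integral_const_mul _ _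
    refine le_trans (le_trans h1 h2) ?_
    rw [h3, mul_comm Q B]
    exact mul_le_mul_of_nonneg_left hqQ hB
  -- uniform bound
  have bound_all : ∀ s : ℝ, -1 ≤ s → |x s| ≤ M := by
    intro s hs
    set T : ℝ := max s 0 with hTdef
    have hT0 : (0:ℝ) ≤ T := le_max_right _ _
    obtain ⟨s0, hs0mem, hs0max⟩ := isCompact_Icc.exists_isMaxOn
      (Set.nonempty_Icc.2 (by linarith : (-1:ℝ) ≤ T))
      ((hx.mono (Set.Icc_subset_Ici_self)).abs)
    have hles0 : ∀ u ∈ Set.Icc (-1:ℝ) T, |x u| ≤ |x s0| := hs0max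
    have hM_T : |x s0| ≤ M := by
      rcases le_or_gt s0 0 with h0 | h0
      · exact hMle s0 ⟨hs0mem.1, h0⟩
      · have hc := core s0 h0.le |x s0| (abs_nonneg _)
          (fun u hu => hles0 u ⟨by linarith [hu.1], le_trans hu.2 hs0mem.2⟩)
        nlinarith [abs_nonneg (x s0)]
    exact le_trans (hles0 s ⟨hs, le_max_left s 0⟩) hM_T
  -- induction
  have Pn : ∀ nN : ℕ, ∀ s : ℝ, (nN:ℝ) - 1 ≤ s → |x s| ≤ Q^nN * M := by
    intro nN
    induction nN with
    | zero => intro s hs; simpa using bound_all s (by simpa using hs)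
    | succ k ih =>
      intro s hs
      have hk : (0:ℝ) ≤ (k:ℝ) := Nat.cast_nonneg k
      have hs0 : (0:ℝ) ≤ s := by push_cast at hs; linarith
      have hc := core s hs0 (Q^k * M) (by positivity)
        (fun u hu => ih u (by push_cast at hs ⊢; linarith [hu.1]))
      calc |x s| ≤ Q * (Q^k*M) := hc
        _ = Q^(k+1)*M := by ring
  -- conclusion
  intro t ht θ hθ
  set nn : ℕ := ⌊t⌋₊ with hnn
  have hn1 : (nn:ℝ) ≤ t := Nat.floor_le ht
  have hn2 : t < (nn:ℝ) + 1 := Nat.lt_floor_add_one t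
  have hb1 : |x (t+θ)| ≤ Q^nn * M := Pn nn (t+θ) (by linarith [hθ.1])
  have hb2 : Q^nn ≤ Real.exp α * Real.exp (-α * t) := by
    have hlogQ : Real.log Q < 0 := Real.log_neg hQ0 hQ1
    have e1 : Q^nn = Real.exp ((nn:ℝ) * Real.log Q) := by
      rw [Real.exp_nat_mul, Real.exp_log hQ0]
    have e2 : Real.exp α * Real.exp (-α * t) = Real.exp ((t-1) * Real.log Q) := by
      rw [← Real.exp_add]; congr 1; simp only [hαdef]; ring
    rw [e1, e2]
    exact Real.exp_le_exp.2 (by nlinarith)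
  calc |x (t+θ)| ≤ Q^nn * M := hb1
    _ ≤ (Real.exp α * Real.exp (-α * t)) * M := mul_le_mul_of_nonneg_right hb2 hM0

lemma unstableB (a b : ℝ) (hd : a - b/2 < -1) : ¬ StronglyStableAB a b := by
  intro hSS
  have hd0 : (0:ℝ) < b/2 - a := by linarith
  have hσ0 : 0 < Real.log (b/2 - a) := Real.log_pos (by linarith)
  set σ : ℝ := Real.log (b/2 - a) with hσ
  set x : ℝ → ℝ := fun t => Real.exp (σ * t) * Real.cos (π * t) with hx
  have hES := hSS (fun _ => (-1:ℝ)) measurable_const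
    (fun θ _ => ⟨le_refl _, by norm_num⟩)
    (by
      have h0 : {θ ∈ Set.Icc (-1:ℝ) 0 | (-1:ℝ) = 0} = ∅ := by ext θ; simp
      rw [h0]; simp)
  obtain ⟨K, hK, α, hα, H⟩ := hES
  have hxeq : ∀ t ≥ (0:ℝ), x t = ∫ θ in (-1:ℝ)..0, x (t + -1) * (a + b * θ) := by
    intro t _
    rw [const_delay a b t x]
    have h1 : x (t-1) = Real.exp (σ * t) * Real.exp (-σ) * (-Real.cos (π * t)) := by
      simp only [hx]
      rw [show π*(t-1) = π*t - π by ring, Real.cos_sub_pi, ← Real.exp_add,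
        show σ*t + -σ = σ*(t-1) by ring]
    have h2 : a - b/2 = -Real.exp σ := by
      rw [hσ, Real.exp_log hd0]; ring
    rw [h1, h2, show Real.exp (σ*t) * Real.exp (-σ) * (-Real.cos (π*t)) * (-Real.exp σ)
        = Real.exp (σ*t) * Real.cos (π*t) * (Real.exp (-σ) * Real.exp σ) by ring,
      ← Real.exp_add, neg_add_cancel, Real.exp_zero, mul_one]
  have hxcont : Continuous x := by
    rw [hx]
    exact (Real.continuous_exp.comp (continuous_const.mul continuous_id)).mul
      (Real.continuous_cos.comp (continuous_const.mul continuous_id))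
  have Hx := H x hxcont.continuousOn hxeq
  apply no_decay K α hK hα x _ (sSup_le_one_of x ?_) ?_ Hx
  · intro s hs
    simp only [hx]
    rw [abs_mul, abs_of_pos (Real.exp_pos _)]
    have h1 : Real.exp (σ * s) ≤ 1 := by
      rw [← Real.exp_zero]
      exact Real.exp_le_exp.2 (by nlinarith [hs.2])
    have h2 := Real.abs_cos_le_one (π * s)
    nlinarith [abs_nonneg (Real.cos (π * s)), Real.exp_pos (σ * s)]
  · intro k
    simp only [hx]
    rw [show π*(2*(k:ℝ)) = (k:ℝ)*(2*π) by ring, Real.cos_nat_mul_two_pi, mul_one,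
      abs_of_pos (Real.exp_pos _), ← Real.exp_zero]
    exact Real.exp_le_exp.2 (by positivity)

lemma unstableC (a b : ℝ) (hq1 : 1 ≤ Ppart a b + Npart a b) (hdle : |a - b/2| ≤ 1) :
    ¬ StronglyStableAB a b := by
  intro hSS
  have hsub : Ppart a b - Npart a b = a - b/2 := PN_sub a b
  rw [← hsub] at hdle
  obtain ⟨c1, c2, hc1a, hc1b, hc2a, hc2b, E1, E2⟩ :=
    angles (Ppart a b) (Npart a b) (Ppart_nonneg a b) (Npart_nonneg a b) hq1
      (abs_le.1 hdle).2 (abs_le.1 hdle).1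
  have hπ : 0 < 2*π := Real.two_pi_pos
  set r1 : ℝ := c1/(2*π) - 1 with hr1def
  set r2 : ℝ := c2/(2*π) - 1 with hr2def
  have hr1mem : -1 ≤ r1 ∧ r1 < 0 := by
    constructor
    · have : 0 ≤ c1/(2*π) := div_nonneg hc1a hπ.le
      rw [hr1def]; linarith
    · have : c1/(2*π) < 1 := (div_lt_one hπ).2 (by linarith [Real.pi_pos])
      rw [hr1def]; linarith
  have hr2mem : -1 ≤ r2 ∧ r2 < 0 := by
    constructor
    · have : 0 ≤ c2/(2*π) := div_nonneg hc2a hπ.le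
      rw [hr2def]; linarith
    · have : c2/(2*π) < 1 := (div_lt_one hπ).2 hc2b
      rw [hr2def]; linarith
  have hES := hSS (fun θ => if 0 ≤ a + b*θ then r1 else r2)
    (Measurable.ite (measurableSet_le measurable_const (lin_cont a b).measurable)
      measurable_const measurable_const)
    (by
      intro θ _
      simp only []
      split_ifs
      · exact ⟨hr1mem.1, hr1mem.2.le⟩
      · exact ⟨hr2mem.1, hr2mem.2.le⟩)
    (by
      have hset : {θ ∈ Set.Icc (-1:ℝ) 0 | (if 0 ≤ a + b*θ then r1 else r2) = 0} = ∅ := by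
        ext θ
        simp only [Set.mem_setOf_eq, Set.mem_empty_iff_false, iff_false, not_and]
        intro _
        split_ifs
        · exact ne_of_lt hr1mem.2
        · exact ne_of_lt hr2mem.2
      rw [hset]
      simp)
  obtain ⟨K, hK, α, hα, H⟩ := hES
  set x : ℝ → ℝ := fun t => Real.cos (2*π*t) with hxdef
  have hxeq : ∀ t ≥ (0:ℝ), x t
      = ∫ θ in (-1:ℝ)..0, x (t + (if 0 ≤ a + b*θ then r1 else r2)) * (a + b * θ) := by
    intro t _
    have step1 : ∀ θ : ℝ, x (t + (if 0 ≤ a + b*θ then r1 else r2)) * (a+b*θ)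
        = (if 0 ≤ a + b*θ then x (t+r1) else x (t+r2))*(a+b*θ) := by
      intro θ
      split_ifs <;> rfl
    rw [intervalIntegral.integral_congr
      (g := fun θ => (if 0 ≤ a + b*θ then x (t+r1) else x (t+r2))*(a+b*θ))
      (fun θ _ => step1 θ), two_point a b (x (t+r1)) (x (t+r2))]
    have exp1 : x (t+r1) = Real.cos (2*π*t) * Real.cos c1 - Real.sin (2*π*t) * Real.sin c1 := by
      simp only [hxdef]
      rw [show 2*π*(t + r1) = 2*π*t + c1 - 2*π by rw [hr1def]; field_simp; ring,
        Real.cos_sub_two_pi, Real.cos_add]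
    have exp2 : x (t+r2) = Real.cos (2*π*t) * Real.cos c2 - Real.sin (2*π*t) * Real.sin c2 := by
      simp only [hxdef]
      rw [show 2*π*(t + r2) = 2*π*t + c2 - 2*π by rw [hr2def]; field_simp; ring,
        Real.cos_sub_two_pi, Real.cos_add]
    rw [exp1, exp2]
    simp only [hxdef]
    linear_combination Real.sin (2*π*t) * E2 - Real.cos (2*π*t) * E1
  have hxcont : Continuous x := by
    rw [hxdef]; exact Real.continuous_cos.comp (continuous_const.mul continuous_id)
  have Hx := H x hxcont.continuousOn hxeq
  apply no_decay K α hK hα x _ (sSup_le_one_of x ?_) ?_ Hx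
  · intro s _
    simp only [hxdef]
    exact Real.abs_cos_le_one _
  · intro k
    simp only [hxdef]
    rw [show 2*π*(2*(k:ℝ)) = ((2*k : ℕ):ℝ)*(2*π) by push_cast; ring,
      Real.cos_nat_mul_two_pi]
    norm_num

/-- the scalar equation `x(t) = ∫_{-1}^0 x(t+θ)(a+bθ)dθ` is strongly stable
iff `(a,b)` belongs to `{(a−b)² + a² < 2|b|, a(b−a) > 0} ∪ {|a − b/2| < 1, a(b−a) ≤ 0}`. -/
theorem stmt13 (a b : ℝ) :
    StronglyStableAB a b ↔
      (((a - b) ^ 2 + a ^ 2 < 2 * |b| ∧ a * (b - a) > 0) ∨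
        (|a - b / 2| < 1 ∧ a * (b - a) ≤ 0)) := by
  constructor
  · intro hSS
    by_contra hRHS
    have hq1 : 1 ≤ ∫ θ in (-1:ℝ)..0, |a + b*θ| := by
      rcases le_or_gt (a*(b-a)) 0 with hc | hc
      · rw [q_eq_nosign a b hc]
        by_contra hlt
        push_neg at hlt
        exact hRHS (Or.inr ⟨hlt, hc⟩)
      · rw [q_eq_sign a b hc]
        have hb : b ≠ 0 := by rintro rfl; nlinarith [sq_nonneg a]
        have hnl : ¬(((a-b)^2 + a^2) < 2*|b|) := fun h => hRHS (Or.inl ⟨h, hc⟩)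
        push_neg at hnl
        rw [one_le_div (mul_pos two_pos (abs_pos.2 hb))]
        exact hnl
    rcases lt_or_ge 1 (a - b/2) with hd | hd
    · exact unstableA a b hd hSS
    rcases lt_or_ge (a - b/2) (-1) with hd' | hd'
    · exact unstableB a b hd' hSS
    · exact unstableC a b (by rw [PN_add]; exact hq1) (abs_le.2 ⟨hd', hd⟩) hSS
  · intro hRHS φ _ hmaps _
    apply stable_of_q_lt_one a b ?_ φ hmaps
    rcases hRHS with ⟨h1, h2⟩ | ⟨h1, h2⟩
    · rw [q_eq_sign a b h2, div_lt_one (mul_pos two_pos (abs_pos.2 (by rintro rfl; nlinarith [sq_nonneg a] : b ≠ 0)))]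
      exact h1
    · rw [q_eq_nosign a b h2]
      exact h1
end

section
/- Let a, b ∈ ℝ satisfy 2 − 2a + b < 0, and define Q(s) = s² − as + b + ((a − b)s − b)e^{−s}. Then Q has a real root s₂ > 0. -/
open Real

lemma exp_neg_remainder {s : ℝ} (h0 : 0 ≤ s) (h1 : s ≤ 1) :
    |Real.exp (-s) - (1 - s + s ^ 2 / 2)| ≤ 2 / 9 * s ^ 3 := by
  have hx : |(-s : ℝ)| ≤ 1 := by rw [abs_neg, abs_of_nonneg h0]; exact h1
  have := Real.exp_bound hx (n := 3) (by norm_num)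
  have hsum : ∑ m ∈ Finset.range 3, (-s) ^ m / (m.factorial : ℝ)
      = 1 - s + s ^ 2 / 2 := by
    simp [Finset.sum_range_succ, Nat.factorial]
    ring
  rw [hsum] at this
  have habs : |(-s : ℝ)| = s := by rw [abs_neg, abs_of_nonneg h0]
  rw [habs] at this
  calc |Real.exp (-s) - (1 - s + s ^ 2 / 2)| ≤ s ^ 3 * ((3 : ℕ).succ / ((3 : ℕ).factorial * 3)) := this
    _ = 2 / 9 * s ^ 3 := by norm_num [Nat.factorial]; ring

lemma key_upper (a b : ℝ) {s : ℝ} (h0 : 0 ≤ s) (h1 : s ≤ 1) :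
    s ^ 2 - a * s + b + ((a - b) * s - b) * Real.exp (-s)
      ≤ (1 - a + b / 2) * s ^ 2 + (|a - b| + |b|) * s ^ 3 := by
  set r := Real.exp (-s) - (1 - s + s ^ 2 / 2) with hr_def
  have hr : |r| ≤ 2 / 9 * s ^ 3 := exp_neg_remainder h0 h1
  have hexp : Real.exp (-s) = 1 - s + s ^ 2 / 2 + r := by rw [hr_def]; ring
  have hQ : s ^ 2 - a * s + b + ((a - b) * s - b) * Real.exp (-s)
      = (1 - a + b / 2) * s ^ 2 + (a - b) * s ^ 3 / 2 + ((a - b) * s - b) * r := by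
    rw [hexp]; ring
  rw [hQ]
  have h2 : ((a - b) * s - b) * r ≤ (|a - b| * s + |b|) * (2 / 9 * s ^ 3) := by
    calc ((a - b) * s - b) * r ≤ |((a - b) * s - b) * r| := le_abs_self _
      _ = |(a - b) * s - b| * |r| := abs_mul _ _
      _ ≤ (|a - b| * s + |b|) * (2 / 9 * s ^ 3) := by
          apply mul_le_mul _ hr (abs_nonneg _) (by positivity)
          calc |(a - b) * s - b| ≤ |(a - b) * s| + |b| := abs_sub _ _
            _ = |a - b| * s + |b| := by rw [abs_mul, abs_of_nonneg h0]
  have h3 : (a - b) * s ^ 3 / 2 ≤ |a - b| * s ^ 3 / 2 := by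
    have := le_abs_self (a - b)
    have h4 : (0:ℝ) ≤ s ^ 3 := by positivity
    nlinarith
  have h5 : |a - b| * s ≤ |a - b| := by
    nlinarith [abs_nonneg (a - b)]
  nlinarith [abs_nonneg (a - b), abs_nonneg b, pow_nonneg h0 3]

/-- If `2 − 2a + b < 0`, then `Q(s) = s² − as + b + ((a−b)s − b)e^{−s}` has a
positive real root. -/
theorem stmt15 (a b : ℝ) (h : 2 - 2 * a + b < 0) :
    ∃ s : ℝ, 0 < s ∧ s ^ 2 - a * s + b + ((a - b) * s - b) * Real.exp (-s) = 0 := by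
  set Q : ℝ → ℝ := fun s => s ^ 2 - a * s + b + ((a - b) * s - b) * Real.exp (-s) with hQdef
  have hQcont : Continuous Q := by
    apply Continuous.add
    · fun_prop
    · fun_prop
  set c : ℝ := 1 - a + b / 2 with hc_def
  have hc : c < 0 := by rw [hc_def]; linarith
  set K : ℝ := |a - b| + |b| with hK_def
  have hK : 0 ≤ K := by positivity
  set s₀ : ℝ := min 1 ((-c) / (K + 1)) with hs0_def
  have hs0_pos : 0 < s₀ := by
    apply lt_min one_pos
    apply div_pos (by linarith) (by linarith)
  have hs0_le1 : s₀ ≤ 1 := min_le_left _ _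
  have hs0_le : s₀ ≤ (-c) / (K + 1) := min_le_right _ _
  have hQs0 : Q s₀ < 0 := by
    have hkey := key_upper a b hs0_pos.le hs0_le1
    have hKs0 : K * s₀ < -c := by
      have : K * s₀ ≤ K * ((-c) / (K + 1)) :=
        mul_le_mul_of_nonneg_left hs0_le hK
      have h2 : K * ((-c) / (K + 1)) < -c := by
        rw [mul_div_assoc']
        rw [div_lt_iff₀ (by linarith)]
        nlinarith
      exact lt_of_le_of_lt this h2
    have : Q s₀ ≤ c * s₀ ^ 2 + K * s₀ ^ 3 := hkey
    have h3 : c * s₀ ^ 2 + K * s₀ ^ 3 = s₀ ^ 2 * (c + K * s₀) := by ring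
    have h4 : s₀ ^ 2 * (c + K * s₀) < 0 :=
      mul_neg_of_pos_of_neg (by positivity) (by linarith)
    calc Q s₀ ≤ c * s₀ ^ 2 + K * s₀ ^ 3 := this
      _ = s₀ ^ 2 * (c + K * s₀) := h3
      _ < 0 := h4
  set s₁ : ℝ := |a| + |a - b| + 2 * |b| + 2 with hs1_def
  have hs1_ge2 : 2 ≤ s₁ := by
    have := abs_nonneg a; have := abs_nonneg b; have := abs_nonneg (a-b); linarith
  have hs0_le_s1 : s₀ ≤ s₁ := by linarith
  have hQs1 : 0 < Q s₁ := by
    have hs1_pos : 0 < s₁ := by linarith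
    have hexp_le : Real.exp (-s₁) ≤ 1 := by
      rw [Real.exp_le_one_iff]; linarith
    have hexp_pos : 0 < Real.exp (-s₁) := Real.exp_pos _
    have habs : |((a - b) * s₁ - b) * Real.exp (-s₁)| ≤ |a - b| * s₁ + |b| := by
      rw [abs_mul]
      calc |(a - b) * s₁ - b| * |Real.exp (-s₁)|
          ≤ (|a - b| * s₁ + |b|) * 1 := by
            apply mul_le_mul
            · calc |(a - b) * s₁ - b| ≤ |(a - b) * s₁| + |b| := abs_sub _ _
                _ = |a - b| * s₁ + |b| := by rw [abs_mul, abs_of_nonneg hs1_pos.le]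
            · rw [abs_of_nonneg hexp_pos.le]; exact hexp_le
            · exact abs_nonneg _
            · positivity
        _ = |a - b| * s₁ + |b| := mul_one _
    have h1 : -( |a - b| * s₁ + |b|) ≤ ((a - b) * s₁ - b) * Real.exp (-s₁) :=
      neg_le_of_abs_le habs
    have h2 : -|a| ≤ a := neg_abs_le a
    have h3 : a ≤ |a| := le_abs_self a
    have h4 : -|b| ≤ b := neg_abs_le b
    have hQ1 : Q s₁ = s₁ ^ 2 - a * s₁ + b + ((a - b) * s₁ - b) * Real.exp (-s₁) := rfl
    rw [hQ1]
    have hsq : s₁ ^ 2 = s₁ * s₁ := sq s₁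
    nlinarith [abs_nonneg a, abs_nonneg b, abs_nonneg (a - b)]
  have hIVT := intermediate_value_Icc hs0_le_s1 hQcont.continuousOn
  have h0mem : (0 : ℝ) ∈ Set.Icc (Q s₀) (Q s₁) := ⟨hQs0.le, hQs1.le⟩
  obtain ⟨s, hs_mem, hs_eq⟩ := hIVT h0mem
  exact ⟨s, lt_of_lt_of_le hs0_pos hs_mem.1, hs_eq⟩
end
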